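/- Let d ≥ 2. For every ε > 0 there exist θ ∈ ℝ^d and u ∈ ℝ^d with ‖u‖_∞ ≤ 1 such that ∑_{k=1}^d σ(θ)_k u_k² − (∑_{k=1}^d σ(θ)_k u_k)² > 1 − ε. Combined with the upper bound uᵀ(diag(σ(θ)) − σ(θ)σ(θ)ᵀ)u ≤ 1 for all θ and all ‖u‖_∞ ≤ 1, this shows that the ℓ∞-smoothness constant of f(θ) = KL(p‖σ(θ)) equals exactly 1 for any probability vector p. -/

import Mathlib

/-- The softmax map `σ : ℝ^d → ℝ^d`, `σ(θ)_k = exp(θ_k) / ∑_j exp(θ_j)`. -/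
noncomputable def softmax {d : ℕ} (θ : Fin d → ℝ) : Fin d → ℝ :=
  fun k => Real.exp (θ k) / ∑ j, Real.exp (θ j)

lemma softmax_sum_pos {d : ℕ} (hd : 0 < d) (θ : Fin d → ℝ) :
    0 < ∑ j, Real.exp (θ j) :=
  Finset.sum_pos (fun j _ => Real.exp_pos _) (by simp [Finset.univ_nonempty_iff, Fin.pos_iff_nonempty.mp hd])

lemma softmax_sum_one {d : ℕ} (hd : 0 < d) (θ : Fin d → ℝ) :
    ∑ k, softmax θ k = 1 := by
  have h := softmax_sum_pos hd θ
  simp only [softmax]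
  rw [← Finset.sum_div, div_self (ne_of_gt h)]

/-- for every `ε > 0` there are `θ` and `u` with `‖u‖_∞ ≤ 1` such that the
Hessian quadratic form `∑_k σ(θ)_k u_k² − (∑_k σ(θ)_k u_k)²` exceeds `1 − ε`; combined
with the upper bound `uᵀ(diag(σ(θ)) − σ(θ)σ(θ)ᵀ)u ≤ 1` for all `θ` and `‖u‖_∞ ≤ 1`,
the ℓ∞-smoothness constant of `f(θ) = KL(p‖σ(θ))` equals exactly `1`.
(The norm on `Fin d → ℝ` is the sup norm.) -/
theorem softmax_kl_linf_smoothness_exact (d : ℕ) (hd : 2 ≤ d) :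
    (∀ ε > (0 : ℝ), ∃ θ u : Fin d → ℝ, ‖u‖ ≤ 1 ∧
      1 - ε < ∑ k, softmax θ k * (u k) ^ 2 - (∑ k, softmax θ k * u k) ^ 2) ∧
    (∀ θ u : Fin d → ℝ, ‖u‖ ≤ 1 →
      ∑ k, softmax θ k * (u k) ^ 2 - (∑ k, softmax θ k * u k) ^ 2 ≤ 1) := by
  have hd0 : 0 < d := by omega
  constructor
  · intro ε hε
    set i0 : Fin d := ⟨0, by omega⟩ with hi0
    set i1 : Fin d := ⟨1, by omega⟩ with hi1
    have hne : i0 ≠ i1 := by simp [hi0, hi1, Fin.ext_iff]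
    set E : ℝ := (d : ℝ) / ε + 1 with hE
    have hEpos : 0 < E := by positivity
    set t := Real.log E with ht
    have het : Real.exp t = E := Real.exp_log hEpos
    set θ : Fin d → ℝ := fun j => if j = i0 ∨ j = i1 then t else 0 with hθ
    set u : Fin d → ℝ := fun k => if k = i0 then 1 else if k = i1 then -1 else 0 with hu
    have hne' : i1 ≠ i0 := hne.symm
    have hu0 : u i0 = 1 := by simp [hu]
    have hu1 : u i1 = -1 := by simp [hu, hne']
    have huo : ∀ k, k ≠ i0 → k ≠ i1 → u k = 0 := by
      intro k h0 h1; simp [hu, h0, h1]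
    have hS : ∑ j, Real.exp (θ j) = 2 * E - 2 + d := by
      have hpt : ∀ j : Fin d,
          Real.exp (θ j) = (if j = i0 then E - 1 else 0) + ((if j = i1 then E - 1 else 0) + 1) := by
        intro j
        by_cases h0 : j = i0 <;> by_cases h1 : j = i1 <;>
          simp [hθ, h0, h1, het, hne, hne', Real.exp_zero] <;> first | ring | (exfalso; exact hne (h0 ▸ h1 ▸ rfl))
      rw [Finset.sum_congr rfl (fun j _ => hpt j)]
      rw [Finset.sum_add_distrib, Finset.sum_add_distrib, Finset.sum_ite_eq' , Finset.sum_ite_eq',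
        Finset.sum_const]
      simp [Finset.card_univ]
      ring
    have hSpos : 0 < 2 * E - 2 + (d : ℝ) := by
      have : (2 : ℝ) ≤ (d : ℝ) := by exact_mod_cast hd
      nlinarith
    have hσ0 : softmax θ i0 = E / (2 * E - 2 + d) := by
      show Real.exp (θ i0) / ∑ j, Real.exp (θ j) = _; rw [hS]; simp [hθ, het]
    have hσ1 : softmax θ i1 = E / (2 * E - 2 + d) := by
      show Real.exp (θ i1) / ∑ j, Real.exp (θ j) = _; rw [hS]; simp [hθ, het]
    refine ⟨θ, u, ?_, ?_⟩
    · rw [pi_norm_le_iff_of_nonneg zero_le_one]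
      intro k
      by_cases h0 : k = i0 <;> by_cases h1 : k = i1 <;>
        simp [hu, h0, h1, hne, hne']
    · have h1sum : ∑ k, softmax θ k * u k = 0 := by
        have hpt : ∀ k : Fin d, softmax θ k * u k =
            (if k = i0 then softmax θ i0 else 0) + (if k = i1 then -softmax θ i1 else 0) := by
          intro k
          by_cases h0 : k = i0
          · subst h0; simp [hne, hu0]
          · by_cases h1 : k = i1
            · subst h1; simp [hne', hu1]
            · rw [huo k h0 h1]; simp [h0, h1]
        rw [Finset.sum_congr rfl (fun k _ => hpt k), Finset.sum_add_distrib,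
          Finset.sum_ite_eq', Finset.sum_ite_eq']
        simp [hσ0, hσ1]
      have h2sum : ∑ k, softmax θ k * (u k) ^ 2 = 2 * E / (2 * E - 2 + d) := by
        have hpt : ∀ k : Fin d, softmax θ k * (u k) ^ 2 =
            (if k = i0 then softmax θ i0 else 0) + (if k = i1 then softmax θ i1 else 0) := by
          intro k
          by_cases h0 : k = i0
          · subst h0; simp [hne, hu0]
          · by_cases h1 : k = i1
            · subst h1; simp [hne', hu1]
            · rw [huo k h0 h1]; simp [h0, h1]
        rw [Finset.sum_congr rfl (fun k _ => hpt k), Finset.sum_add_distrib,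
          Finset.sum_ite_eq', Finset.sum_ite_eq']
        simp [hσ0, hσ1]
        ring
      rw [h1sum, h2sum]
      have hEε : E * ε = (d : ℝ) + ε := by
        rw [hE, add_mul, div_mul_cancel₀ _ hε.ne', one_mul]
      have h00 : (0:ℝ) ^ 2 = 0 := by norm_num
      rw [h00, sub_zero, lt_div_iff₀ hSpos]
      have hd2 : (2 : ℝ) ≤ (d : ℝ) := by exact_mod_cast hd
      nlinarith
  · intro θ u hu
    have hσnn : ∀ k, 0 ≤ softmax θ k := by
      intro k
      have := softmax_sum_pos hd0 θ
      exact div_nonneg (Real.exp_pos _).le this.le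
    have husq : ∀ k, (u k) ^ 2 ≤ 1 := by
      intro k
      have h1 : ‖u k‖ ≤ ‖u‖ := norm_le_pi_norm u k
      have h2 : |u k| ≤ 1 := le_trans h1 hu
      nlinarith [abs_nonneg (u k), sq_abs (u k), sq_nonneg (|u k| - 1)]
    have h1 : ∑ k, softmax θ k * (u k) ^ 2 ≤ ∑ k, softmax θ k := by
      apply Finset.sum_le_sum
      intro k _
      nlinarith [hσnn k, husq k]
    have h2 : (0 : ℝ) ≤ (∑ k, softmax θ k * u k) ^ 2 := sq_nonneg _
    rw [softmax_sum_one hd0 θ] at h1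
    linarith
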